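/- In the deferred-acceptance algorithm, once a doctor receives a proposal, the doctor remains matched for the rest of the algorithm, and the sequence of patients tentatively held by that doctor is weakly improving in the doctor's preference order. -/

import Mathlib

/-- State of the patient-proposing deferred-acceptance (Gale–Shapley) algorithm:
`tent d` is the patient tentatively held by doctor `d` (if any), and
`next p` is the index (in patient `p`'s preference list) of the next doctor
that `p` will propose to. -/
structure GSState (n : ℕ) where
  tent : Fin n → Option (Fin n)
  next : Fin n → ℕ

/-- The set of currently free (unmatched) patients. -/
def freeSet {n : ℕ} (s : GSState n) : Finset (Fin n) :=
  Finset.univ.filter (fun p => ∀ d, s.tent d ≠ some p)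

/-- One step of the algorithm: a free patient proposes to the most preferred
doctor not yet proposed to; the doctor holds the better of the proposer and
the currently held patient (lower `drank` value = more preferred). -/
def gsStep {n : ℕ} (plist : Fin n → ℕ → Fin n) (drank : Fin n → Fin n → ℕ)
    (s : GSState n) : GSState n :=
  if h : (freeSet s).Nonempty then
    let p := (freeSet s).min' h
    let d := plist p (s.next p)
    let next' := Function.update s.next p (s.next p + 1)
    match s.tent d with
    | none => ⟨Function.update s.tent d (some p), next'⟩
    | some q =>
        if drank d p < drank d q then ⟨Function.update s.tent d (some p), next'⟩
        else ⟨s.tent, next'⟩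
  else s

/-- Running the algorithm for a given number of steps from the empty state. -/
def gsRun {n : ℕ} (plist : Fin n → ℕ → Fin n) (drank : Fin n → Fin n → ℕ) :
    ℕ → GSState n
  | 0 => ⟨fun _ => none, fun _ => 0⟩
  | k + 1 => gsStep plist drank (gsRun plist drank k)

/-- The final state of the deferred-acceptance algorithm (it stabilizes after
at most `n * n` proposals). -/
def gsFinal (n : ℕ) (plist : Fin n → ℕ → Fin n) (drank : Fin n → Fin n → ℕ) :
    GSState n :=
  gsRun plist drank (n * n + 1)

/- Deferred acceptance, seen from one doctor: the rank of the patient the doctor holds, with "nobody"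
ranked last (`⊤`), can only go down. A step changes only the doctor `d` receiving the proposal, and
`d` replaces the held patient only when it has none or strictly prefers the proposer. Hence this
rank is antitone along the run, and once it is finite it stays finite. -/

namespace GSState

variable {n : ℕ}

def heldRank (drank : Fin n → Fin n → ℕ) (s : GSState n) (d : Fin n) : WithTop ℕ :=
  (s.tent d).elim ⊤ fun p => (drank d p : WithTop ℕ)

@[simp]
lemma heldRank_of_tent_eq_none {drank : Fin n → Fin n → ℕ} {s : GSState n} {d : Fin n}
    (h : s.tent d = none) : s.heldRank drank d = ⊤ := by
  simp [heldRank, h]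

@[simp]
lemma heldRank_of_tent_eq_some {drank : Fin n → Fin n → ℕ} {s : GSState n} {d p : Fin n}
    (h : s.tent d = some p) : s.heldRank drank d = drank d p := by
  simp [heldRank, h]

lemma exists_tent_eq_some_of_heldRank_ne_top {drank : Fin n → Fin n → ℕ} {s : GSState n}
    {d : Fin n} (h : s.heldRank drank d ≠ ⊤) : ∃ p, s.tent d = some p := by
  cases hd : s.tent d with
  | none => simp [hd] at h
  | some p => exact ⟨p, rfl⟩

end GSState

open GSState

section Run

variable {n : ℕ} (plist : Fin n → ℕ → Fin n) (drank : Fin n → Fin n → ℕ)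

lemma gsStep_tent_eq_or_improves (s : GSState n) :
    (gsStep plist drank s).tent = s.tent ∨
      ∃ d p, (gsStep plist drank s).tent = Function.update s.tent d (some p) ∧
        ∀ q, s.tent d = some q → drank d p < drank d q := by
  unfold gsStep
  split
  · dsimp only
    split
    · next hnone => exact Or.inr ⟨_, _, rfl, by simp [hnone]⟩
    · next q hq =>
      split_ifs with hlt
      · exact Or.inr ⟨_, _, rfl, by simpa [hq] using hlt⟩
      · exact Or.inl rfl
  · exact Or.inl rfl

lemma heldRank_gsStep_le (s : GSState n) (d : Fin n) :
    (gsStep plist drank s).heldRank drank d ≤ s.heldRank drank d := by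
  obtain hsame | ⟨d₀, p, hupd, hbetter⟩ := gsStep_tent_eq_or_improves plist drank s
  · simp [heldRank, hsame]
  · obtain rfl | hd := eq_or_ne d d₀
    · cases hheld : s.tent d with
      | none => simp [hheld]
      | some q => simpa [heldRank, hupd, hheld] using (hbetter q hheld).le
    · simp [heldRank, hupd, Function.update_of_ne hd]

lemma heldRank_gsRun_le_of_le (d : Fin n) {k k' : ℕ} (hk : k ≤ k') :
    (gsRun plist drank k').heldRank drank d ≤ (gsRun plist drank k).heldRank drank d :=
  antitone_nat_of_succ_le (f := fun k => (gsRun plist drank k).heldRank drank d)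
    (fun k => heldRank_gsStep_le plist drank (gsRun plist drank k) d) hk

end Run

theorem gs_doctor_monotone_general (n : ℕ)
    (plist : Fin n → ℕ → Fin n) (drank : Fin n → Fin n → ℕ) :
    (∀ (k k' : ℕ) (d p : Fin n), k ≤ k' →
        (gsRun plist drank k).tent d = some p →
        ∃ p', (gsRun plist drank k').tent d = some p') ∧
    (∀ (k k' : ℕ) (d p p' : Fin n), k ≤ k' →
        (gsRun plist drank k).tent d = some p →
        (gsRun plist drank k').tent d = some p' →
        drank d p' ≤ drank d p) := by
  refine ⟨fun k k' d p hk h => ?_, fun k k' d p p' hk h h' => ?_⟩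
  · have hle := heldRank_gsRun_le_of_le plist drank d hk
    rw [heldRank_of_tent_eq_some h] at hle
    exact exists_tent_eq_some_of_heldRank_ne_top (ne_top_of_le_ne_top WithTop.coe_ne_top hle)
  · have hle := heldRank_gsRun_le_of_le plist drank d hk
    rw [heldRank_of_tent_eq_some h, heldRank_of_tent_eq_some h'] at hle
    exact_mod_cast hle

/-- once a doctor receives a proposal he stays matched for the
rest of the algorithm, and the sequence of patients tentatively held by the
doctor is weakly improving in the doctor's preference order (lower `drank`
value = more preferred). -/
theorem gs_doctor_monotone (n : ℕ)
    (plist : Fin n → ℕ → Fin n) (prank drank : Fin n → Fin n → ℕ)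
    (hplist : ∀ p, Function.Bijective (fun k : Fin n => plist p (k : ℕ)))
    (hprank : ∀ p (k : Fin n), prank p (plist p (k : ℕ)) = (k : ℕ))
    (hdinj : ∀ d, Function.Injective (drank d)) :
    (∀ (k k' : ℕ) (d p : Fin n), k ≤ k' →
        (gsRun plist drank k).tent d = some p →
        ∃ p', (gsRun plist drank k').tent d = some p') ∧
    (∀ (k k' : ℕ) (d p p' : Fin n), k ≤ k' →
        (gsRun plist drank k).tent d = some p →
        (gsRun plist drank k').tent d = some p' →
        drank d p' ≤ drank d p) :=
  gs_doctor_monotone_general n plist drank
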